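/- (Backlog bound.) Let R, R* : ℝ≥0 → ℝ≥0 be the arrival and departure flows of a system, let α, β : ℝ≥0 → ℝ≥0, and suppose: (i) R is α-constrained, i.e., R(t) − R(s) ≤ α(t − s) for all 0 ≤ s ≤ t; and (ii) the system offers service curve β, i.e., R*(t) ≥ (R ⊗ β)(t) for all t ≥ 0. Then for every t ≥ 0, the backlog b(t) = R(t) − R*(t) satisfies b(t) ≤ sup_{u ≥ 0} (α(u) − β(u)), the maximum vertical distance between α and β. -/

import Mathlib

open scoped NNReal

/-- Min-plus convolution of `f` and `g`:
`(f ⊗ g)(t) = inf_{0 ≤ s ≤ t} (f s + g (t - s))`. -/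
noncomputable def minPlusConv (f g : ℝ≥0 → ℝ≥0) (t : ℝ≥0) : ℝ≥0 :=
  sInf {x : ℝ≥0 | ∃ s : ℝ≥0, s ≤ t ∧ x = f s + g (t - s)}

/-!
Idea: for every `s ≤ t`, `R t - R s ≤ α (t - s) ≤ β (t - s) + M` whenever `M` bounds `α - β`,
so `R t - M` is a lower bound of every term `R s + β (t - s)` of the convolution, hence of
`(R ⊗ β)(t) ≤ R* t`. The supremum in `EReal` is then handled by testing against its upper bounds.
-/

theorem le_minPlusConv {f g : ℝ≥0 → ℝ≥0} {t : ℝ≥0} {x : ℝ}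
    (h : ∀ s ≤ t, x ≤ (f s : ℝ) + g (t - s)) : x ≤ minPlusConv f g t := by
  -- Pass through `x.toNNReal`, since the infimum lives in `ℝ≥0`.
  refine Real.toNNReal_le_iff_le_coe.1 (le_csInf ⟨_, 0, zero_le, rfl⟩ ?_)
  rintro _ ⟨s, hs, rfl⟩
  exact Real.toNNReal_le_iff_le_coe.2 (mod_cast h s hs)

theorem sub_minPlusConv_le {R α β : ℝ≥0 → ℝ≥0} {M : ℝ}
    (hα : ∀ s t : ℝ≥0, s ≤ t → (R t : ℝ) - (R s : ℝ) ≤ (α (t - s) : ℝ))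
    (hM : ∀ u, (α u : ℝ) - β u ≤ M) (t : ℝ≥0) :
    (R t : ℝ) - minPlusConv R β t ≤ M := by
  have hlower : (R t : ℝ) - M ≤ minPlusConv R β t :=
    le_minPlusConv fun s hs => by linarith [hα s t hs, hM (t - s)]
  linarith

theorem EReal.coe_le_iSup_coe_of_forall_le {ι : Type*} [Nonempty ι] {f : ι → ℝ} {x : ℝ}
    (h : ∀ M : ℝ, (∀ i, f i ≤ M) → x ≤ M) : (x : EReal) ≤ ⨆ i, (f i : EReal) := by
  refine le_iSup_iff.2 fun b hb => ?_
  induction b using EReal.rec with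
  | bot => exact absurd (hb (Classical.arbitrary ι)) (not_le.2 (EReal.bot_lt_coe _))
  | coe M => exact mod_cast h M fun i => mod_cast hb i
  | top => exact le_top

/-- Backlog bound: if `R` is `α`-constrained and the system offers service curve `β`
(`R* ≥ R ⊗ β`), then for every `t`, the backlog `R t - R* t` is bounded by the
maximum vertical distance `sup_{u ≥ 0} (α u - β u)` (taken in `ℝ ∪ {+∞}`). -/
theorem backlog_bound (R Rstar α β : ℝ≥0 → ℝ≥0)
    (hα : ∀ s t : ℝ≥0, s ≤ t → (R t : ℝ) - (R s : ℝ) ≤ (α (t - s) : ℝ))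
    (hβ : ∀ t : ℝ≥0, minPlusConv R β t ≤ Rstar t) :
    ∀ t : ℝ≥0,
      ((R t : ℝ) : EReal) - ((Rstar t : ℝ) : EReal) ≤
        ⨆ u : ℝ≥0, (((α u : ℝ) : EReal) - ((β u : ℝ) : EReal)) := by
  intro t
  simp only [← EReal.coe_sub]
  refine EReal.coe_le_iSup_coe_of_forall_le fun M hM => ?_
  have hserved : (minPlusConv R β t : ℝ) ≤ Rstar t := mod_cast hβ t
  linarith [sub_minPlusConv_le hα hM t]
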